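/- arXiv:2007.02682 — 4 statements merged into one kernel-verified Lean document; each statement's English description precedes it below -/
import Mathlib

section
/- For the path graph P_n with n ≥ 2 vertices and adjacency matrix A, if perfect state transfer occurs between the end vertices (i.e., |⟨n| exp(-itA) |1⟩| = 1 for some t > 0), then the ratio (λ_j - λ_l)/(λ_j' - λ_l') is rational for all eigenvalues λ_j, λ_l, λ_j', λ_l' of A with λ_j' ≠ λ_l', where all eigenvalues have nonzero overlap with both end vertices. -/
/-!
`U(t) = exp(-itA)` is a symmetric unitary matrix, so if `γ = U(t)₀,ₙ₋₁` has modulus `1` then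
row `0` of `U(t)` is `γ` times the indicator of vertex `n - 1`. Applied to an eigenvector `v` of `A` with
eigenvalue `λ` and `v₀ ≠ 0`, this gives `exp(-itλ) v₀ = γ vₙ₋₁`. The three-term recurrence
along the path makes `vₙ₋₁ / v₀` a real number (a Chebyshev value), so all the phases
`exp(-itλ)` lie on the line `γℝ`. Hence `t(λ - λ') ∈ πℤ` for any two such eigenvalues, and the
ratio of two such differences is rational.
-/

open Matrix

/-- Adjacency matrix of the path graph `P_n` on vertices `0, …, n-1`. -/
def pathAdj (n : ℕ) : Matrix (Fin n) (Fin n) ℂ :=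
  Matrix.of fun i j => if (i : ℕ) + 1 = j ∨ (j : ℕ) + 1 = i then 1 else 0

namespace NormedSpace

theorem exp_mul_of_mul_eq_smul {𝕂 𝔸 : Type*} [RCLike 𝕂] [NormedRing 𝔸] [NormedAlgebra ℚ 𝔸]
    [NormedAlgebra 𝕂 𝔸] [CompleteSpace 𝔸] {a x : 𝔸} {c : 𝕂} (h : a * x = c • x) :
    exp a * x = exp c • x := by
  have hsemiconj : SemiconjBy x (algebraMap 𝕂 𝔸 c) a := by
    rw [SemiconjBy, h, Algebra.smul_def, Algebra.commutes]
  rw [← hsemiconj.exp_right.eq, ← algebraMap_exp_comm, Algebra.smul_def, Algebra.commutes]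

end NormedSpace

namespace Matrix

variable {ι 𝕜 : Type*} [Fintype ι] [DecidableEq ι] [RCLike 𝕜]

theorem exp_mulVec_of_mulVec_eq_smul {M : Matrix ι ι 𝕜} {v : ι → 𝕜} {c : 𝕜}
    (h : M *ᵥ v = c • v) : NormedSpace.exp M *ᵥ v = NormedSpace.exp c • v := by
  -- `V` has every column equal to `v`, which turns the eigenvector into a matrix identity.
  let V : Matrix ι ι 𝕜 := of fun i _ => v i
  have hV : M * V = c • V := by
    ext i j
    simpa [V, mul_apply, mulVec, dotProduct] using congrFun h i
  have hexp : NormedSpace.exp M * V = NormedSpace.exp c • V := by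
    open scoped Norms.Operator in exact NormedSpace.exp_mul_of_mul_eq_smul hV
  funext i
  simpa [V, mul_apply, mulVec, dotProduct] using congrFun (congrFun hexp i) i

theorem exp_mem_unitaryGroup {M : Matrix ι ι 𝕜} (hM : Mᴴ = -M) :
    NormedSpace.exp M ∈ unitaryGroup ι 𝕜 := by
  rw [mem_unitaryGroup_iff', star_eq_conjTranspose, ← exp_conjTranspose, hM,
    ← exp_add_of_commute _ _ (Commute.refl M).neg_left, neg_add_cancel, NormedSpace.exp_zero]

theorem sum_norm_sq_apply_of_mem_unitaryGroup {U : Matrix ι ι 𝕜} (hU : U ∈ unitaryGroup ι 𝕜)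
    (i : ι) : ∑ j, ‖U i j‖ ^ 2 = 1 := by
  have h : (U * star U) i i = 1 := by rw [Unitary.mul_star_self_of_mem hU, one_apply_eq]
  simp only [mul_apply, star_apply, RCLike.star_def, RCLike.mul_conj] at h
  exact_mod_cast h

theorem apply_eq_zero_of_norm_apply_eq_one {U : Matrix ι ι 𝕜} (hU : U ∈ unitaryGroup ι 𝕜)
    {i j : ι} (hij : ‖U i j‖ = 1) {k : ι} (hk : k ≠ j) : U i k = 0 := by
  have hrest : ∑ l ∈ Finset.univ.erase j, ‖U i l‖ ^ 2 = 0 := by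
    have := Finset.add_sum_erase Finset.univ (fun l => ‖U i l‖ ^ 2) (Finset.mem_univ j)
    rw [sum_norm_sq_apply_of_mem_unitaryGroup hU, hij] at this
    linarith
  rw [Finset.sum_eq_zero_iff_of_nonneg fun _ _ => by positivity] at hrest
  simpa using hrest k (Finset.mem_erase.2 ⟨hk, Finset.mem_univ k⟩)

theorem mulVec_apply_eq_of_norm_apply_eq_one {U : Matrix ι ι 𝕜} (hU : U ∈ unitaryGroup ι 𝕜)
    {i j : ι} (hij : ‖U i j‖ = 1) (v : ι → 𝕜) : (U *ᵥ v) i = U i j * v j :=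
  Fintype.sum_eq_single j fun k hk => by simp [apply_eq_zero_of_norm_apply_eq_one hU hij hk]

end Matrix

open Complex in
theorem exists_int_mul_pi_eq_sub_of_exp_mul_I_eq_mul_ofReal {x y r s : ℝ} {γ : ℂ}
    (hx : exp (x * I) = γ * r) (hy : exp (y * I) = γ * s) : ∃ k : ℤ, k * Real.pi = x - y := by
  have hγs : γ * s ≠ 0 := hy ▸ exp_ne_zero _
  have hquot : exp ((x - y : ℝ) * I) = (r / s : ℝ) := by
    rw [ofReal_sub, sub_mul, exp_sub, hx, hy, mul_div_mul_left _ _ (left_ne_zero_of_mul hγs),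
      ofReal_div]
  rw [← Real.sin_eq_zero_iff, ← exp_ofReal_mul_I_im, hquot, ofReal_im]

theorem exists_rat_div_eq_of_mul_eq_int_mul {s x y p : ℝ} {k m : ℤ} (hs : s ≠ 0) (hy : y ≠ 0)
    (hkx : k * p = s * x) (hmy : m * p = s * y) : ∃ q : ℚ, x / y = q := by
  have hm : (m : ℝ) ≠ 0 := by
    rintro h
    rw [h, zero_mul, eq_comm] at hmy
    exact mul_ne_zero hs hy hmy
  refine ⟨k / m, ?_⟩
  push_cast
  rw [div_eq_div_iff hy hm]
  apply mul_left_cancel₀ hs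
  linear_combination (m : ℝ) * hkx.symm - k * hmy.symm

section PathGraph

variable {n : ℕ}

theorem pathAdj_isSymm (n : ℕ) : (pathAdj n).IsSymm := by
  ext i j
  simp only [pathAdj, transpose_apply, of_apply, or_comm]

theorem pathAdj_isHermitian (n : ℕ) : (pathAdj n).IsHermitian := by
  ext i j
  simp [pathAdj, apply_ite star, or_comm]

theorem pathAdj_mulVec_apply_zero (h : 1 < n) (v : Fin n → ℂ) :
    (pathAdj n *ᵥ v) ⟨0, by omega⟩ = v ⟨1, h⟩ := by
  refine (Fintype.sum_eq_single (⟨1, h⟩ : Fin n) fun j hj => ?_).trans (by simp [pathAdj])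
  simp only [Ne, Fin.ext_iff] at hj
  simp only [pathAdj, of_apply]
  rw [if_neg (by omega), zero_mul]

theorem pathAdj_mulVec_apply_succ {k : ℕ} (h : k + 2 < n) (v : Fin n → ℂ) :
    (pathAdj n *ᵥ v) ⟨k + 1, by omega⟩ = v ⟨k, by omega⟩ + v ⟨k + 2, h⟩ := by
  refine (Fintype.sum_eq_add (⟨k, by omega⟩ : Fin n) ⟨k + 2, h⟩ (by simp) fun j hj => ?_).trans
    (by simp [pathAdj])
  simp only [Ne, Fin.ext_iff] at hj
  simp only [pathAdj, of_apply]
  rw [if_neg (by omega), zero_mul]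

open Polynomial in
theorem pathAdj_eigenvector_apply {v : Fin n → ℂ} {lam : ℝ}
    (hv : pathAdj n *ᵥ v = (lam : ℂ) • v) (m : ℕ) (hm : m < n) :
    v ⟨m, hm⟩ = ((Chebyshev.U ℝ m).eval (lam / 2) : ℝ) * v ⟨0, by omega⟩ := by
  set u : ℕ → ℝ := fun m => (Chebyshev.U ℝ m).eval (lam / 2) with hu
  have hu0 : u 0 = 1 := by simp [hu]
  have hu1 : u 1 = lam := by
    simp only [hu, Nat.cast_one, Chebyshev.U_one, eval_mul, eval_ofNat, eval_X]
    ring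
  have hu2 (m : ℕ) : u (m + 2) = lam * u (m + 1) - u m := by
    simp only [hu]
    push_cast
    rw [Chebyshev.U_add_two]
    simp only [eval_sub, eval_mul, eval_X, eval_ofNat]
    ring
  have hpair (m : ℕ) (hm : m + 1 < n) :
      v ⟨m, by omega⟩ = u m * v ⟨0, by omega⟩ ∧ v ⟨m + 1, hm⟩ = u (m + 1) * v ⟨0, by omega⟩ := by
    induction m with
    | zero =>
      have hv1 := (pathAdj_mulVec_apply_zero hm v).symm.trans (congrFun hv _)
      rw [hu0, hu1, hv1]
      simp
    | succ m ih =>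
      obtain ⟨hvm, hvm1⟩ := ih (by omega)
      have hrec := (pathAdj_mulVec_apply_succ hm v).symm.trans (congrFun hv _)
      simp only [Pi.smul_apply, smul_eq_mul] at hrec
      refine ⟨hvm1, ?_⟩
      rw [hu2]
      push_cast
      linear_combination hrec - hvm + lam * hvm1
  rcases m with _ | m
  · simp
  · exact (hpair m hm).2

noncomputable def pathEvolution (n : ℕ) (t : ℝ) : Matrix (Fin n) (Fin n) ℂ :=
  NormedSpace.exp ((-(Complex.I * t)) • pathAdj n)

theorem pathEvolution_mem_unitaryGroup (n : ℕ) (t : ℝ) :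
    pathEvolution n t ∈ unitaryGroup (Fin n) ℂ := by
  refine exp_mem_unitaryGroup ?_
  rw [conjTranspose_smul, pathAdj_isHermitian, ← neg_smul, star_neg, star_mul',
    Complex.star_def, Complex.conj_I, Complex.conj_ofReal, neg_mul, neg_neg, mul_comm]

theorem pathEvolution_isSymm (n : ℕ) (t : ℝ) : (pathEvolution n t).IsSymm :=
  ((pathAdj_isSymm n).smul _).exp

theorem pathEvolution_mulVec_of_eigenvector {t lam : ℝ} {v : Fin n → ℂ}
    (hv : pathAdj n *ᵥ v = (lam : ℂ) • v) :
    pathEvolution n t *ᵥ v = Complex.exp ((-(t * lam) : ℝ) * Complex.I) • v := by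
  have hMv : ((-(Complex.I * t)) • pathAdj n) *ᵥ v = (-(Complex.I * t) * lam) • v := by
    rw [smul_mulVec, hv, smul_smul]
  rw [pathEvolution, exp_mulVec_of_mulVec_eq_smul hMv, ← Complex.exp_eq_exp_ℂ]
  push_cast
  ring_nf

open Polynomial in
theorem exp_mul_I_eq_pathEvolution_apply_mul (h : 0 < n) {t lam : ℝ}
    (hpst : ‖pathEvolution n t ⟨n - 1, by omega⟩ ⟨0, h⟩‖ = 1) {v : Fin n → ℂ}
    (hv : pathAdj n *ᵥ v = (lam : ℂ) • v) (hv0 : v ⟨0, h⟩ ≠ 0) :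
    Complex.exp ((-(t * lam) : ℝ) * Complex.I) =
      pathEvolution n t ⟨n - 1, by omega⟩ ⟨0, h⟩ *
        ((Chebyshev.U ℝ (n - 1 : ℕ)).eval (lam / 2) : ℝ) := by
  have hsymm := (pathEvolution_isSymm n t).apply ⟨n - 1, by omega⟩ ⟨0, h⟩
  rw [← hsymm] at hpst ⊢
  have hrow := congrFun (pathEvolution_mulVec_of_eigenvector (t := t) hv) ⟨0, h⟩
  rw [mulVec_apply_eq_of_norm_apply_eq_one (pathEvolution_mem_unitaryGroup n t) hpst,
    pathAdj_eigenvector_apply hv, Pi.smul_apply, smul_eq_mul] at hrow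
  apply mul_right_cancel₀ hv0
  linear_combination -hrow

end PathGraph

/-- If the path graph `P_n` (`n ≥ 2`) admits perfect state transfer between its end
vertices, then the ratio of differences of eigenvalues (whose eigenvectors have nonzero
overlap with both end vertices) is rational. -/
theorem path_pst_eigenvalue_ratio_rational (n : ℕ) (hn : 2 ≤ n)
    (hPST : ∃ t : ℝ, 0 < t ∧
      ‖(NormedSpace.exp ((-(Complex.I * t)) • pathAdj n))
        ⟨n - 1, by omega⟩ ⟨0, by omega⟩‖ = 1)
    (lam₁ lam₂ lam₃ lam₄ : ℝ)
    (h₁ : ∃ v : Fin n → ℂ, v ≠ 0 ∧ (pathAdj n).mulVec v = (lam₁ : ℂ) • v ∧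
      v ⟨0, by omega⟩ ≠ 0 ∧ v ⟨n - 1, by omega⟩ ≠ 0)
    (h₂ : ∃ v : Fin n → ℂ, v ≠ 0 ∧ (pathAdj n).mulVec v = (lam₂ : ℂ) • v ∧
      v ⟨0, by omega⟩ ≠ 0 ∧ v ⟨n - 1, by omega⟩ ≠ 0)
    (h₃ : ∃ v : Fin n → ℂ, v ≠ 0 ∧ (pathAdj n).mulVec v = (lam₃ : ℂ) • v ∧
      v ⟨0, by omega⟩ ≠ 0 ∧ v ⟨n - 1, by omega⟩ ≠ 0)
    (h₄ : ∃ v : Fin n → ℂ, v ≠ 0 ∧ (pathAdj n).mulVec v = (lam₄ : ℂ) • v ∧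
      v ⟨0, by omega⟩ ≠ 0 ∧ v ⟨n - 1, by omega⟩ ≠ 0)
    (hne : lam₃ ≠ lam₄) :
    ∃ q : ℚ, (lam₁ - lam₂) / (lam₃ - lam₄) = (q : ℝ) := by
  obtain ⟨t, ht, hpst⟩ := hPST
  obtain ⟨v₁, -, hv₁, hv₁0, -⟩ := h₁
  obtain ⟨v₂, -, hv₂, hv₂0, -⟩ := h₂
  obtain ⟨v₃, -, hv₃, hv₃0, -⟩ := h₃
  obtain ⟨v₄, -, hv₄, hv₄0, -⟩ := h₄
  have hn0 : 0 < n := by omega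
  obtain ⟨k, hk⟩ := exists_int_mul_pi_eq_sub_of_exp_mul_I_eq_mul_ofReal
    (exp_mul_I_eq_pathEvolution_apply_mul hn0 hpst hv₁ hv₁0)
    (exp_mul_I_eq_pathEvolution_apply_mul hn0 hpst hv₂ hv₂0)
  obtain ⟨m, hm⟩ := exists_int_mul_pi_eq_sub_of_exp_mul_I_eq_mul_ofReal
    (exp_mul_I_eq_pathEvolution_apply_mul hn0 hpst hv₃ hv₃0)
    (exp_mul_I_eq_pathEvolution_apply_mul hn0 hpst hv₄ hv₄0)
  exact exists_rat_div_eq_of_mul_eq_int_mul (neg_ne_zero.2 ht.ne') (sub_ne_zero.2 hne)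
    (hk.trans (by ring)) (hm.trans (by ring))
end

section
/- For n ≥ 4, the ratio cos(2π/(n+1))/cos(π/(n+1)) is irrational. -/
open Polynomial

/-- `exp(θ i)` for `θ = π/m` is an algebraic integer (a `2m`-th root of unity). -/
lemma exp_theta_isIntegral (θ : ℝ) (m : ℕ) (hm : 0 < m)
    (h : Complex.exp (θ * Complex.I) ^ (2 * m) = 1) :
    IsIntegral ℤ (Complex.exp (θ * Complex.I)) := by
  refine ⟨X ^ (2 * m) - 1, ?_, ?_⟩
  · apply Polynomial.monic_X_pow_sub
    calc (1 : ℤ[X]).degree ≤ 0 := Polynomial.degree_one_le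
      _ < ((2 * m : ℕ) : WithBot ℕ) := by exact_mod_cast (by omega : 0 < 2 * m)
  · simp [h]

/-- `2 cos(π/m)` is an algebraic integer. -/
lemma two_cos_isIntegral (m : ℕ) (hm : 0 < m) :
    IsIntegral ℤ (2 * Real.cos (Real.pi / m)) := by
  set θ : ℝ := Real.pi / m with hθ
  have hmR : (m : ℝ) ≠ 0 := Nat.cast_ne_zero.mpr hm.ne'
  have hmC : (m : ℂ) ≠ 0 := Nat.cast_ne_zero.mpr hm.ne'
  have key : ∀ s : ℝ, s = θ ∨ s = -θ → Complex.exp (s * Complex.I) ^ (2 * m) = 1 := by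
    intro s hs
    rw [← Complex.exp_nat_mul]
    rcases hs with rfl | rfl
    · rw [show ((2 * m : ℕ) : ℂ) * (θ * Complex.I) = (2 * Real.pi) * Complex.I by
        push_cast [hθ]; field_simp]
      simpa using Complex.exp_int_mul_two_pi_mul_I 1
    · rw [show ((2 * m : ℕ) : ℂ) * ((-θ : ℝ) * Complex.I) = (-1 : ℤ) * (2 * Real.pi * Complex.I) by
        push_cast [hθ]; field_simp]
      simpa using Complex.exp_int_mul_two_pi_mul_I (-1)
  have h1 : IsIntegral ℤ (Complex.exp (θ * Complex.I)) :=
    exp_theta_isIntegral θ m hm (key θ (Or.inl rfl))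
  have h2 : IsIntegral ℤ (Complex.exp ((-θ : ℝ) * Complex.I)) :=
    exp_theta_isIntegral (-θ) m hm (key (-θ) (Or.inr rfl))
  have hsum : IsIntegral ℤ
      (Complex.exp (θ * Complex.I) + Complex.exp ((-θ : ℝ) * Complex.I)) := h1.add h2
  have heq : Complex.exp (θ * Complex.I) + Complex.exp ((-θ : ℝ) * Complex.I)
      = ((2 * Real.cos θ : ℝ) : ℂ) := by
    rw [show ((θ : ℂ)) * Complex.I = (θ : ℂ) * Complex.I from rfl]
    rw [Complex.exp_mul_I, Complex.exp_mul_I]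
    push_cast
    rw [Complex.cos_neg, Complex.sin_neg, ← Complex.ofReal_cos]
    push_cast
    ring
  rw [heq] at hsum
  have : IsIntegral ℤ (algebraMap ℝ ℂ (2 * Real.cos θ)) := by
    simpa [Complex.coe_algebraMap] using hsum
  exact (isIntegral_algebraMap_iff (algebraMap ℝ ℂ).injective).mp this

/-- For `n ≥ 4`, the ratio `cos(2π/(n+1)) / cos(π/(n+1))` is irrational. -/
theorem cos_ratio_irrational (n : ℕ) (hn : 4 ≤ n) :
    Irrational (Real.cos (2 * Real.pi / (n + 1)) / Real.cos (Real.pi / (n + 1))) := by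
  have hpi := Real.pi_pos
  set θ : ℝ := Real.pi / (n + 1) with hθ
  have hn1 : (0 : ℝ) < (n : ℝ) + 1 := by positivity
  have hθpos : 0 < θ := by positivity
  have hθlt : θ < Real.pi / 4 := by
    rw [hθ, div_lt_div_iff₀ hn1 (by norm_num)]
    have : (4 : ℝ) < (n : ℝ) + 1 := by
      have : (4 : ℝ) ≤ (n : ℝ) := by exact_mod_cast hn
      linarith
    nlinarith
  have hθpi : θ ≤ Real.pi := by
    rw [hθ]
    rw [div_le_iff₀ hn1]
    nlinarith
  -- bounds on c = cos θ
  set c : ℝ := Real.cos θ with hc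
  have hclt1 : c < 1 := by
    have := Real.cos_lt_cos_of_nonneg_of_le_pi (le_refl 0) hθpi hθpos
    simpa [hc] using this
  have hcgt : Real.sqrt 2 / 2 < c := by
    have := Real.cos_lt_cos_of_nonneg_of_le_pi hθpos.le
      (by linarith [Real.pi_pos] : Real.pi / 4 ≤ Real.pi) hθlt
    rw [Real.cos_pi_div_four] at this
    simpa [hc] using this
  have hsqrt2 : (1 : ℝ) < Real.sqrt 2 := by
    have : Real.sqrt 1 < Real.sqrt 2 := Real.sqrt_lt_sqrt (by norm_num) (by norm_num)
    simpa using this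
  have hcpos : 0 < c := by linarith
  -- x = 2 cos θ is an algebraic integer
  set x : ℝ := 2 * c with hx
  have hxint : IsIntegral ℤ x := by
    have := two_cos_isIntegral (n + 1) (by omega)
    rw [hx, hc, hθ]
    convert this using 4
    push_cast
    ring
  have hxgt : Real.sqrt 2 < x := by rw [hx]; linarith
  have hxlt : x < 2 := by rw [hx]; linarith
  have hx1 : 1 < x := by linarith
  have hxne : x ≠ 0 := by linarith
  -- the target equals (x^2 - 2)/x
  have htarget : Real.cos (2 * Real.pi / (n + 1)) / Real.cos θ = (x ^ 2 - 2) / x := by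
    have h2θ : 2 * Real.pi / (n + 1) = 2 * θ := by rw [hθ]; ring
    rw [h2θ, Real.cos_two_mul, ← hc, hx]
    rw [div_eq_div_iff (by linarith) (by linarith)]
    ring
  rw [htarget]
  -- suppose it is rational
  rintro ⟨q, hq⟩
  -- then x satisfies x^2 - q x - 2 = 0
  have hquad : x ^ 2 - (q : ℝ) * x - 2 = 0 := by
    have : (q : ℝ) * x = x ^ 2 - 2 := by
      rw [hq]; field_simp
    linarith [this]
  -- bounds on q : 0 < q < 1
  have hqpos : (0 : ℝ) < (q : ℝ) := by
    have hx2 : 2 < x ^ 2 := by nlinarith [Real.sq_sqrt (by norm_num : (2:ℝ) ≥ 0)]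
    nlinarith
  have hqlt1 : (q : ℝ) < 1 := by nlinarith
  by_cases hrat : ∃ z : ℚ, (z : ℝ) = x
  · -- x rational: then x is a rational algebraic integer, hence an integer, but √2 < x < 2
    obtain ⟨z, hz⟩ := hrat
    have hzint : IsIntegral ℤ z := by
      have : IsIntegral ℤ (algebraMap ℚ ℝ z) := by
        simpa [hz] using hxint
      exact (isIntegral_algebraMap_iff (algebraMap ℚ ℝ).injective).mp this
    obtain ⟨k, hk⟩ := IsIntegrallyClosed.isIntegral_iff.mp hzint
    have hkz : (k : ℚ) = z := by exact_mod_cast hk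
    have hkx : (k : ℝ) = x := by
      rw [← hz, ← hkz]; push_cast; ring
    have hk1 : (1 : ℝ) < (k : ℝ) := by rw [hkx]; exact hx1
    have hk2 : (k : ℝ) < 2 := by rw [hkx]; exact hxlt
    have h1 : 1 < k := by exact_mod_cast hk1
    have h2 : k < 2 := by exact_mod_cast hk2
    omega
  · -- x irrational: minpoly ℚ x = X^2 - (q X + 2), so q is an integer, but 0 < q < 1
    have hxintQ : IsIntegral ℚ x := hxint.tower_top
    set p : ℚ[X] := X ^ 2 - (C q * X + C 2) with hp
    have hpmonic : p.Monic := by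
      apply Polynomial.monic_X_pow_sub
      calc (C q * X + C 2).degree ≤ max (C q * X).degree (C (2:ℚ)).degree := Polynomial.degree_add_le _ _
        _ ≤ 1 := by
            apply max_le
            · calc (C q * X).degree ≤ (C q).degree + X.degree := Polynomial.degree_mul_le _ _
                _ ≤ 0 + 1 := by
                    exact add_le_add Polynomial.degree_C_le (le_of_eq Polynomial.degree_X)
                _ = 1 := by norm_num
            · exact le_trans Polynomial.degree_C_le (by norm_num)
        _ < 2 := by norm_num
    have hpdeg : p.natDegree = 2 := by
      have := hpmonic
      rw [hp]
      compute_degree!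
    have hproot : Polynomial.aeval x p = 0 := by
      rw [hp]
      simp only [map_sub, map_add, map_mul, map_pow, Polynomial.aeval_X, Polynomial.aeval_C]
      rw [eq_ratCast (algebraMap ℚ ℝ) q]
      have : (algebraMap ℚ ℝ) 2 = (2 : ℝ) := by norm_num
      rw [this]
      linarith [hquad]
    have hdvd : minpoly ℚ x ∣ p := minpoly.dvd ℚ x hproot
    have hmdeg : 2 ≤ (minpoly ℚ x).natDegree := by
      rw [minpoly.two_le_natDegree_iff hxintQ]
      rintro ⟨z, hz⟩
      exact hrat ⟨z, by simpa using hz⟩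
    have hle : p.natDegree ≤ (minpoly ℚ x).natDegree := by omega
    have heqp : p = minpoly ℚ x :=
      Polynomial.eq_of_monic_of_dvd_of_natDegree_le (minpoly.monic hxintQ) hpmonic hdvd hle
    -- coefficients of minpoly ℚ x are integers
    have hmap : minpoly ℚ x = (minpoly ℤ x).map (algebraMap ℤ ℚ) :=
      minpoly.isIntegrallyClosed_eq_field_fractions ℚ ℝ hxint
    have hcoeff : p.coeff 1 = -q := by
      rw [hp]
      simp [Polynomial.coeff_X_pow, Polynomial.coeff_C]
    have : (-q : ℚ) = ((minpoly ℤ x).coeff 1 : ℚ) := by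
      rw [← hcoeff, heqp, hmap, Polynomial.coeff_map]
      simp
    set k : ℤ := (minpoly ℤ x).coeff 1 with hk
    have hqk : q = -(k : ℚ) := by linarith [this]
    have hqposQ : (0 : ℚ) < q := by exact_mod_cast hqpos
    have hqlt1Q : q < 1 := by exact_mod_cast hqlt1
    rw [hqk] at hqposQ hqlt1Q
    have h1 : k < 0 := by exact_mod_cast (by linarith : (k : ℚ) < 0)
    have h2 : -1 < k := by
      have : (-1 : ℚ) < (k : ℚ) := by linarith
      exact_mod_cast this
    omega
end

section
/- For the path graph P_3 with adjacency matrix A, the transition amplitude between the two end vertices satisfies ⟨3| exp(-itA) |1⟩ = -sin²(t/√2); in particular perfect state transfer between the end vertices occurs at time t = π/√2. -/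
/-!
The adjacency matrix `A` of `P₃` satisfies `A³ = 2A`, so `B = A / √2` satisfies `B³ = B`.
Then `p = (B² + B)/2` and `m = (B² - B)/2` are orthogonal idempotents with `B = p - m`, and
`exp (z • q) = exp z • q + (1 - q)` for an idempotent `q` gives
`exp (z • B) = 1 + sinh z • B + (cosh z - 1) • B²`. At the entry `(2, 0)` only `B²` contributes,
with value `1/2`, so the amplitude is `(cos (√2 t) - 1)/2 = -sin² (t/√2)`.
-/

open Matrix

open NormedSpace

section BanachAlgebra

variable {𝔸 : Type*} [NormedRing 𝔸] [CompleteSpace 𝔸]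

theorem IsIdempotentElem.exp_smul {𝕂 : Type*} [RCLike 𝕂] [NormedAlgebra 𝕂 𝔸] {e : 𝔸}
    (he : IsIdempotentElem e) (z : 𝕂) : exp (z • e) = exp z • e + (1 - e) := by
  have term : ∀ n, (n.factorial⁻¹ : 𝕂) • (z • e) ^ n
      = ((n.factorial⁻¹ : 𝕂) • z ^ n) • e + if n = 0 then 1 - e else 0 := by
    rintro (_ | n)
    · simp
    · simp [smul_pow, he.pow_succ_eq, smul_smul]
  refine (exp_series_hasSum_exp' (𝕂 := 𝕂) (z • e)).unique ?_
  simp_rw [term]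
  exact ((exp_series_hasSum_exp' (𝕂 := 𝕂) z).smul_const e).add (hasSum_ite_eq 0 (1 - e))

variable [NormedAlgebra ℂ 𝔸]

theorem exp_smul_of_pow_three_eq_self {B : 𝔸} (hB : B ^ 3 = B) (z : ℂ) :
    exp (z • B) = 1 + Complex.sinh z • B + (Complex.cosh z - 1) • B ^ 2 := by
  let +nondep : NormedAlgebra ℚ 𝔸 := .restrictScalars ℚ ℂ 𝔸
  set P := B ^ 2
  have hBB : B * B = P := (sq B).symm
  have hBP : B * P = B := by rw [← pow_succ', hB]
  have hPB : P * B = B := by rw [← pow_succ, hB]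
  have hPP : P * P = P := by rw [show P * P = P * B * B by rw [mul_assoc, hBB], hPB, hBB]
  set p : 𝔸 := (2⁻¹ : ℂ) • (P + B)
  set m : 𝔸 := (2⁻¹ : ℂ) • (P - B)
  have hpm : p * m = 0 := by
    simp only [p, m, smul_mul_smul_comm, add_mul, mul_sub, hBB, hBP, hPB, hPP]
    module
  have hmp : m * p = 0 := by
    simp only [p, m, smul_mul_smul_comm, sub_mul, mul_add, hBB, hBP, hPB, hPP]
    module
  have hp : IsIdempotentElem p := by
    simp only [IsIdempotentElem, p, smul_mul_smul_comm, add_mul, mul_add, hBB, hBP, hPB, hPP]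
    module
  have hm : IsIdempotentElem m := by
    simp only [IsIdempotentElem, m, smul_mul_smul_comm, sub_mul, mul_sub, hBB, hBP, hPB, hPP]
    module
  have hcomm : Commute (z • p) ((-z) • m) :=
    ((show Commute p m from hpm.trans hmp.symm).smul_left z).smul_right (-z)
  have hsplit : z • B = z • p + (-z) • m := by simp only [p, m]; module
  rw [hsplit, exp_add_of_commute hcomm, hp.exp_smul, hm.exp_smul]
  simp only [add_mul, mul_add, sub_mul, mul_sub, smul_mul_assoc, mul_smul_comm, one_mul, mul_one,
    hpm]
  simp only [p, m, Complex.cosh, Complex.sinh, ← Complex.exp_eq_exp_ℂ]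
  module

theorem exp_smul_of_pow_three_eq_sq_smul {A : 𝔸} {c : ℂ} (hc : c ≠ 0) (hA : A ^ 3 = c ^ 2 • A)
    (z : ℂ) : exp (z • A) =
      1 + (Complex.sinh (z * c) / c) • A + ((Complex.cosh (z * c) - 1) / c ^ 2) • A ^ 2 := by
  have hB : (c⁻¹ • A) ^ 3 = c⁻¹ • A := by
    rw [smul_pow, hA, smul_smul]
    congr 1
    field_simp
  rw [show z • A = (z * c) • c⁻¹ • A by rw [smul_smul, mul_assoc, mul_inv_cancel₀ hc, mul_one],
    exp_smul_of_pow_three_eq_self hB, smul_pow, smul_smul, smul_smul, inv_pow, div_eq_mul_inv,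
    div_eq_mul_inv]

end BanachAlgebra

theorem Matrix.exp_smul_of_pow_three_eq_sq_smul {n : Type*} [Fintype n] [DecidableEq n]
    {A : Matrix n n ℂ} {c : ℂ} (hc : c ≠ 0) (hA : A ^ 3 = c ^ 2 • A) (z : ℂ) : exp (z • A) =
      1 + (Complex.sinh (z * c) / c) • A + ((Complex.cosh (z * c) - 1) / c ^ 2) • A ^ 2 :=
  open scoped Norms.Operator in _root_.exp_smul_of_pow_three_eq_sq_smul hc hA z

local notation "𝐀" => (!![0, 1, 0; 1, 0, 1; 0, 1, 0] : Matrix (Fin 3) (Fin 3) ℂ)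

theorem pathThreeAdj_pow_three : 𝐀 ^ 3 = ((√2 : ℝ) : ℂ) ^ 2 • 𝐀 := by
  rw [← Complex.ofReal_pow, Real.sq_sqrt zero_le_two, pow_succ, sq]
  norm_num [smul_of]

theorem pathThreeAdj_quadratic_apply_two_zero (a b : ℂ) :
    (1 + a • 𝐀 + b • 𝐀 ^ 2 : Matrix (Fin 3) (Fin 3) ℂ) 2 0 = b := by
  simp [sq]

theorem exp_smul_pathThreeAdj_apply_two_zero (t : ℝ) :
    exp ((-(Complex.I * t)) • 𝐀) 2 0 = (Complex.cos (t * √2) - 1) / 2 := by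
  have hc : ((√2 : ℝ) : ℂ) ≠ 0 := Complex.ofReal_ne_zero.mpr (by positivity)
  rw [Matrix.exp_smul_of_pow_three_eq_sq_smul hc pathThreeAdj_pow_three,
    pathThreeAdj_quadratic_apply_two_zero, ← Complex.ofReal_pow, Real.sq_sqrt zero_le_two,
    show -(Complex.I * t) * √2 = -(t * √2 : ℂ) * Complex.I by ring, Complex.cosh_mul_I,
    Complex.cos_neg]
  norm_num

/-- For `P_3` with adjacency matrix `[[0,1,0],[1,0,1],[0,1,0]]`, the transition amplitude
between the end vertices is `⟨3|exp(-itA)|1⟩ = -sin²(t/√2)`; in particular perfect state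
transfer between the end vertices occurs at time `t = π/√2`. -/
theorem p3_amplitude_and_pst :
    (∀ t : ℝ, (NormedSpace.exp ((-(Complex.I * t)) •
        (!![0, 1, 0; 1, 0, 1; 0, 1, 0] : Matrix (Fin 3) (Fin 3) ℂ))) 2 0
      = -(Complex.sin ((t / Real.sqrt 2 : ℝ) : ℂ)) ^ 2) ∧
    ‖(NormedSpace.exp ((-(Complex.I * (Real.pi / Real.sqrt 2 : ℝ))) •
      (!![0, 1, 0; 1, 0, 1; 0, 1, 0] : Matrix (Fin 3) (Fin 3) ℂ))) 2 0‖ = 1 := by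
  have amplitude (t : ℝ) : exp ((-(Complex.I * t)) • 𝐀) 2 0
      = -(Complex.sin ((t / √2 : ℝ) : ℂ)) ^ 2 := by
    have double : (t : ℂ) * √2 = 2 * ((t / √2 : ℝ) : ℂ) := by
      norm_cast
      field_simp
      simp
    rw [exp_smul_pathThreeAdj_apply_two_zero, double, Complex.cos_two_mul_eq_one_sub]
    ring
  refine ⟨amplitude, ?_⟩
  rw [amplitude, div_div, Real.mul_self_sqrt zero_le_two]
  simp
end

section
/- Let H be a real symmetric matrix and |A⟩, |B⟩, |C⟩ distinct standard basis vectors. Suppose t_AB > 0 is the minimal time with |⟨B|exp(-iHt_AB)|A⟩| = 1. Then there is no time t_AC with 0 < t_AC < t_AB such that |⟨C|exp(-iHt_AC)|A⟩| = 1. -/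
/-!
Write `U t = exp (-iHt)`. For real symmetric `H` the matrices `U t` are unitary and symmetric, and
`U (-t) = (U t)ᴴ` is the entrywise conjugate of `U t`. A unit-modulus entry of a unitary column
forces the rest of the column to vanish, so perfect transfer `a → c` at time `t` means
`U t eₐ = φ e_c`, and by symmetry `U t e_c = φ eₐ`; hence `U (2t) eₐ = φ² eₐ` is a revival at
`a`. A revival at time `2t` leaves `|⟨b|U s|a⟩|` unchanged under `s ↦ s + 2t`, and conjugation
makes it even in `s`, so transfer `a → b` also happens at time `|t_AB - 2t|`, which is positive
(as `a ≠ b`) and smaller than `t_AB`.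
-/

open Matrix

section UnitaryColumn

variable {𝕜 ι : Type*} [RCLike 𝕜] [Fintype ι] [DecidableEq ι]

theorem Matrix.sum_norm_sq_apply_eq_one_of_mem_unitaryGroup {U : Matrix ι ι 𝕜}
    (hU : U ∈ unitaryGroup ι 𝕜) (j : ι) : ∑ i, ‖U i j‖ ^ 2 = 1 := by
  have h : (star U * U) j j = 1 := by rw [mem_unitaryGroup_iff'.mp hU, one_apply_eq]
  simp only [star_eq_conjTranspose, mul_apply, conjTranspose_apply, RCLike.star_def,
    RCLike.conj_mul] at h
  exact_mod_cast h

theorem Matrix.apply_eq_zero_of_norm_apply_eq_one_s9 {U : Matrix ι ι 𝕜}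
    (hU : U ∈ unitaryGroup ι 𝕜) {i k j : ι} (hk : ‖U k j‖ = 1) (hik : i ≠ k) :
    U i j = 0 := by
  have hle : ∑ l ∈ {i, k}, ‖U l j‖ ^ 2 ≤ ∑ l, ‖U l j‖ ^ 2 :=
    Finset.sum_le_sum_of_subset_of_nonneg (Finset.subset_univ _) fun _ _ _ => by positivity
  rw [Finset.sum_pair hik, hk, sum_norm_sq_apply_eq_one_of_mem_unitaryGroup hU] at hle
  exact norm_eq_zero.mp (pow_eq_zero_iff two_ne_zero |>.mp (by nlinarith [norm_nonneg (U i j)]))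

end UnitaryColumn

theorem Matrix.mul_apply_of_forall_ne_apply_eq_zero {ι R : Type*} [Fintype ι]
    [NonUnitalNonAssocSemiring R] {m n : Type*} (X : Matrix m ι R) (Y : Matrix ι n R)
    {i : m} {j : n} {k : ι} (hY : ∀ l, l ≠ k → Y l j = 0) : (X * Y) i j = X i k * Y k j :=
  Finset.sum_eq_single k (fun l _ hl => mul_eq_zero_of_right _ (hY l hl)) (by simp)

section TimeEvolution

variable {ι : Type*} [Fintype ι] [DecidableEq ι] (H : Matrix ι ι ℝ)

noncomputable def timeEvolution (t : ℝ) : Matrix ι ι ℂ :=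
  NormedSpace.exp ((-(Complex.I * t)) • H.map (fun x => (x : ℂ)))

theorem timeEvolution_zero : timeEvolution H 0 = 1 := by
  simp [timeEvolution]

theorem timeEvolution_add (s t : ℝ) :
    timeEvolution H (s + t) = timeEvolution H s * timeEvolution H t := by
  rw [timeEvolution, timeEvolution, timeEvolution,
    ← exp_add_of_commute _ _ (((Commute.refl _).smul_left _).smul_right _), ← add_smul]
  push_cast
  ring_nf

variable {H}

theorem timeEvolution_transpose (hH : H.IsSymm) (t : ℝ) :
    (timeEvolution H t)ᵀ = timeEvolution H t := by
  rw [timeEvolution, ← exp_transpose, transpose_smul, ← transpose_map, hH]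

theorem timeEvolution_conjTranspose (hH : H.IsSymm) (t : ℝ) :
    (timeEvolution H t)ᴴ = timeEvolution H (-t) := by
  rw [timeEvolution, timeEvolution, ← exp_conjTranspose, conjTranspose_smul,
    ← conjTranspose_map _ (fun x => (Complex.conj_ofReal x).symm),
    conjTranspose_eq_transpose_of_trivial, hH]
  simp

theorem timeEvolution_mem_unitaryGroup (hH : H.IsSymm) (t : ℝ) :
    timeEvolution H t ∈ unitaryGroup ι ℂ := by
  rw [mem_unitaryGroup_iff', star_eq_conjTranspose, timeEvolution_conjTranspose hH,
    ← timeEvolution_add, neg_add_cancel, timeEvolution_zero]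

theorem norm_timeEvolution_neg_apply (hH : H.IsSymm) (t : ℝ) (i j : ι) :
    ‖timeEvolution H (-t) i j‖ = ‖timeEvolution H t i j‖ := by
  rw [← timeEvolution_conjTranspose hH, conjTranspose_apply, norm_star,
    ← transpose_apply (timeEvolution H t), timeEvolution_transpose hH]

end TimeEvolution

section PerfectStateTransfer

variable {ι : Type*} [Fintype ι] [DecidableEq ι] (H : Matrix ι ι ℝ)

def IsPerfectStateTransfer (t : ℝ) (a b : ι) : Prop :=
  ‖timeEvolution H t b a‖ = 1

variable {H}

namespace IsPerfectStateTransfer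

variable {s t : ℝ} {a b c : ι}

theorem apply_eq_zero (hH : H.IsSymm) (h : IsPerfectStateTransfer H t a b) {i : ι}
    (hi : i ≠ b) : timeEvolution H t i a = 0 :=
  apply_eq_zero_of_norm_apply_eq_one_s9 (timeEvolution_mem_unitaryGroup hH t) h hi

theorem symm (hH : H.IsSymm) (h : IsPerfectStateTransfer H t a b) :
    IsPerfectStateTransfer H t b a := by
  rwa [IsPerfectStateTransfer, ← transpose_apply (timeEvolution H t) b a,
    timeEvolution_transpose hH]

theorem neg (hH : H.IsSymm) (h : IsPerfectStateTransfer H t a b) :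
    IsPerfectStateTransfer H (-t) a b := by
  rwa [IsPerfectStateTransfer, norm_timeEvolution_neg_apply hH]

theorem abs (hH : H.IsSymm) (h : IsPerfectStateTransfer H t a b) :
    IsPerfectStateTransfer H |t| a b := by
  rcases abs_choice t with ht | ht <;> rw [ht]
  exacts [h, h.neg hH]

theorem ne_zero (hab : a ≠ b) (h : IsPerfectStateTransfer H t a b) : t ≠ 0 := by
  rintro rfl
  simp [IsPerfectStateTransfer, timeEvolution_zero, one_apply_ne hab.symm] at h

theorem revival (hH : H.IsSymm) (h : IsPerfectStateTransfer H t a c) :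
    IsPerfectStateTransfer H (t + t) a a := by
  have hca : ‖timeEvolution H t a c‖ = 1 := h.symm hH
  rw [IsPerfectStateTransfer, timeEvolution_add,
    mul_apply_of_forall_ne_apply_eq_zero _ _ fun _ => h.apply_eq_zero hH, norm_mul, hca, h,
    one_mul]

theorem add_revival_iff (hH : H.IsSymm) (hr : IsPerfectStateTransfer H t a a) :
    IsPerfectStateTransfer H (s + t) a b ↔ IsPerfectStateTransfer H s a b := by
  rw [IsPerfectStateTransfer, IsPerfectStateTransfer, timeEvolution_add,
    mul_apply_of_forall_ne_apply_eq_zero _ _ fun _ => hr.apply_eq_zero hH, norm_mul, hr,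
    mul_one]

end IsPerfectStateTransfer

end PerfectStateTransfer

theorem no_routing_real_hamiltonian_general {n : ℕ} (H : Matrix (Fin n) (Fin n) ℝ) (hsymm : H.IsSymm)
    (a b c : Fin n) (hab : a ≠ b)
    (tAB : ℝ)
    (hPST : ‖(NormedSpace.exp
        ((-(Complex.I * tAB)) • H.map (fun x => (x : ℂ)))) b a‖ = 1)
    (hmin : ∀ t : ℝ, 0 < t →
      ‖(NormedSpace.exp
        ((-(Complex.I * t)) • H.map (fun x => (x : ℂ)))) b a‖ = 1 → tAB ≤ t) :
    ¬ ∃ t : ℝ, 0 < t ∧ t < tAB ∧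
      ‖(NormedSpace.exp
        ((-(Complex.I * t)) • H.map (fun x => (x : ℂ)))) c a‖ = 1 := by
  rintro ⟨t, ht, htAB, hAC⟩
  have hrevival : IsPerfectStateTransfer H (t + t) a a :=
    IsPerfectStateTransfer.revival (c := c) hsymm hAC
  have hshift : IsPerfectStateTransfer H (tAB - (t + t)) a b :=
    (hrevival.add_revival_iff hsymm).mp (by rwa [sub_add_cancel])
  have hpos : 0 < |tAB - (t + t)| := abs_pos.mpr (hshift.ne_zero hab)
  have hlt : |tAB - (t + t)| < tAB := abs_sub_lt_iff.mpr ⟨by linarith, by linarith⟩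
  exact hlt.not_ge (hmin _ hpos (hshift.abs hsymm))

/-- Impossibility of routing for real Hamiltonians: if `t_AB > 0` is the minimal time with
perfect state transfer from vertex `a` to vertex `b`, then there is no earlier time
`0 < t < t_AB` at which there is perfect state transfer from `a` to a third vertex `c`. -/
theorem no_routing_real_hamiltonian {n : ℕ} (H : Matrix (Fin n) (Fin n) ℝ) (hsymm : H.IsSymm)
    (a b c : Fin n) (hab : a ≠ b) (hac : a ≠ c) (hbc : b ≠ c)
    (tAB : ℝ) (htAB : 0 < tAB)
    (hPST : ‖(NormedSpace.exp
        ((-(Complex.I * tAB)) • H.map (fun x => (x : ℂ)))) b a‖ = 1)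
    (hmin : ∀ t : ℝ, 0 < t →
      ‖(NormedSpace.exp
        ((-(Complex.I * t)) • H.map (fun x => (x : ℂ)))) b a‖ = 1 → tAB ≤ t) :
    ¬ ∃ t : ℝ, 0 < t ∧ t < tAB ∧
      ‖(NormedSpace.exp
        ((-(Complex.I * t)) • H.map (fun x => (x : ℂ)))) c a‖ = 1 :=
  no_routing_real_hamiltonian_general H hsymm a b c hab tAB hPST hmin
end
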